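/- arXiv:1103.3871 — 6 statements merged into one kernel-verified Lean document; each statement's English description precedes it below -/
import Mathlib

section
/- Let n ≥ 1 and let C ⊆ ℝ^n be a compact convex set with nonempty interior, and let d be a natural number. Then for every ε > 0 there exist δ ∈ (0,1) and a map f : ℝ^n → ℝ^n with f(ℝ^n) ⊆ C, f(x) = x for x ∈ C, f Lipschitz with constant 1 on ℝ^n, such that for every set E ⊆ ℝ^n with E ∩ B(C,ε) = ∅ one has H^d(f(E)) ≤ (1 − δ)^d · H^d(E). (Paper's Corollary 4.42: the retraction of Lemma 4.31 strictly decreases d-dimensional Hausdorff measure of sets lying outside the ε-neighborhood of C.) -/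
/-!
Let `p` be the metric projection onto `C`, `x₀ ∈ C`, and `f x = x₀ + (1 - s x) • (p x - x₀)`
with `s x = δ t²`, `t = min (dist x C) ε / ε`. Outside the `ε`-neighbourhood `s ≡ δ`, so there
`f` is `p` followed by a homothety of ratio `1 - δ`, which gives the bound on `H^d`.
Globally `f` is `1`-Lipschitz because `p` is firmly nonexpansive:
`‖p x - p y‖² + (dist x C - dist y C)² ≤ ‖x - y‖²`. The radial term `(s x - s y) • (p y - x₀)`
has size at most `2 δ t |dist x C - dist y C| diam C / ε`; by AM-GM it is paid for partly by
the contraction of `p x - p y` by `1 - s x = 1 - δ t²` and partly by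
`(dist x C - dist y C)²`, once `δ ≲ (ε / diam C)²`. The quadratic profile of `s` is what
makes the factor `t` appear.
-/

open MeasureTheory Metric
open scoped RealInnerProductSpace

section MetricProj

variable {E : Type*} [NormedAddCommGroup E] [InnerProductSpace ℝ E]

structure IsMetricProj (C : Set E) (p : E → E) : Prop where
  mem : ∀ x, p x ∈ C
  inner_nonpos : ∀ x, ∀ z ∈ C, ⟪x - p x, z - p x⟫ ≤ 0

theorem exists_isMetricProj {C : Set E} (hne : C.Nonempty) (hC : IsComplete C)
    (hconv : Convex ℝ C) : ∃ p, IsMetricProj C p := by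
  choose p hpC hp using exists_norm_eq_iInf_of_complete_convex hne hC hconv
  exact ⟨p, hpC, fun x => (norm_eq_iInf_iff_real_inner_le_zero hconv (hpC x)).1 (hp x)⟩

namespace IsMetricProj

variable {C : Set E} {p : E → E}

theorem apply_of_mem (hp : IsMetricProj C p) {x : E} (hx : x ∈ C) : p x = x :=
  (sub_eq_zero.1 (real_inner_self_nonpos.1 (hp.inner_nonpos x x hx))).symm

theorem inner_sub_nonneg (hp : IsMetricProj C p) (x y : E) :
    0 ≤ ⟪p x - p y, (x - p x) - (y - p y)⟫ := by
  have hx := hp.inner_nonpos x (p y) (hp.mem y)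
  have hy := hp.inner_nonpos y (p x) (hp.mem x)
  rw [← neg_sub (p x) (p y), inner_neg_right, real_inner_comm] at hx
  rw [real_inner_comm] at hy
  rw [inner_sub_right]
  linarith

/-- Firm nonexpansiveness, in the weakened form that only remembers the distances to `C`. -/
theorem sq_norm_sub_add_sq_le (hp : IsMetricProj C p) (x y : E) :
    ‖p x - p y‖ ^ 2 + (‖x - p x‖ - ‖y - p y‖) ^ 2 ≤ ‖x - y‖ ^ 2 := by
  have hdist : (‖x - p x‖ - ‖y - p y‖) ^ 2 ≤ ‖(x - p x) - (y - p y)‖ ^ 2 :=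
    sq_le_sq' (abs_le.1 (abs_norm_sub_norm_le _ _)).1
      ((le_abs_self _).trans (abs_norm_sub_norm_le _ _))
  have hsplit : x - y = (p x - p y) + ((x - p x) - (y - p y)) := by abel
  rw [hsplit, norm_add_sq_real]
  linarith [hp.inner_sub_nonneg x y]

theorem norm_sub_le (hp : IsMetricProj C p) (x y : E) : ‖p x - p y‖ ≤ ‖x - y‖ :=
  (pow_le_pow_iff_left₀ (norm_nonneg _) (norm_nonneg _) two_ne_zero).1 <| by
    linarith [hp.sq_norm_sub_add_sq_le x y, sq_nonneg (‖x - p x‖ - ‖y - p y‖)]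

end IsMetricProj

end MetricProj

noncomputable def shrink (δ ε r : ℝ) : ℝ := δ * (min r ε / ε) ^ 2

section Shrink

variable {δ ε r r' : ℝ}

theorem shrink_zero (hε : 0 ≤ ε) : shrink δ ε 0 = 0 := by
  simp [shrink, hε]

theorem shrink_of_le (hε : ε ≠ 0) (h : ε ≤ r) : shrink δ ε r = δ := by
  simp [shrink, min_eq_right h, hε]

theorem shrink_nonneg (hδ : 0 ≤ δ) : 0 ≤ shrink δ ε r := by
  unfold shrink; positivity

theorem min_div_mem_Icc (hε : 0 < ε) (hr : 0 ≤ r) : min r ε / ε ∈ Set.Icc 0 1 :=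
  ⟨by positivity, (div_le_one hε).2 (min_le_right _ _)⟩

theorem shrink_le (hδ : 0 ≤ δ) (hε : 0 < ε) (hr : 0 ≤ r) : shrink δ ε r ≤ δ := by
  obtain ⟨h0, h1⟩ := min_div_mem_Icc hε hr
  exact mul_le_of_le_one_right hδ (pow_le_one₀ h0 h1)

theorem shrink_mono (hδ : 0 ≤ δ) (hε : 0 < ε) (hr' : 0 ≤ r') (h : r' ≤ r) :
    shrink δ ε r' ≤ shrink δ ε r := by
  unfold shrink
  gcongr

theorem shrink_sub_shrink_le (hδ : 0 ≤ δ) (hε : 0 < ε) (hr' : 0 ≤ r') (h : r' ≤ r) :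
    shrink δ ε r - shrink δ ε r' ≤ 2 * δ * (min r ε / ε) * ((r - r') / ε) := by
  have hmin : min r' ε ≤ min r ε := min_le_min_right ε h
  have hlip : min r ε - min r' ε ≤ r - r' := by
    rcases min_choice r' ε with h' | h' <;> rw [h'] <;>
      linarith [min_le_left r ε, min_le_right r ε]
  have hmin0 : 0 ≤ min r' ε := le_min hr' hε.le
  have key : (min r ε + min r' ε) * (min r ε - min r' ε) ≤ 2 * min r ε * (r - r') := by
    nlinarith
  calc shrink δ ε r - shrink δ ε r'
      = δ * ((min r ε + min r' ε) * (min r ε - min r' ε)) / ε ^ 2 := by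
        unfold shrink; field_simp; ring
    _ ≤ δ * (2 * min r ε * (r - r')) / ε ^ 2 := by gcongr
    _ = 2 * δ * (min r ε / ε) * ((r - r') / ε) := by field_simp

end Shrink

theorem sq_one_sub_mul_add_le {a t c δ w b : ℝ} (ha : 0 ≤ a) (ht0 : 0 ≤ t) (ht1 : t ≤ 1)
    (hδ0 : 0 ≤ δ) (hδ : δ ≤ 1 / 2) (hc0 : 0 ≤ c) (hc : c ≤ 2 * δ * t * w)
    (hw : 6 * δ * w ^ 2 ≤ b ^ 2) : ((1 - δ * t ^ 2) * a + c) ^ 2 ≤ a ^ 2 + b ^ 2 := by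
  have hσ0 : 0 ≤ δ * t ^ 2 := by positivity
  have hσ1 : δ * t ^ 2 ≤ 1 / 2 := by nlinarith [pow_le_one₀ (n := 2) ht0 ht1]
  have hsq : ((1 - δ * t ^ 2) * a + c) ^ 2 ≤ (1 - δ * t ^ 2) * a ^ 2 + 2 * a * c + c ^ 2 := by
    nlinarith [mul_nonneg (mul_nonneg hσ0 (by linarith : 0 ≤ 1 - δ * t ^ 2)) (sq_nonneg a),
      mul_nonneg (mul_nonneg hσ0 ha) hc0]
  -- AM-GM: `2 a (2 δ t w) ≤ δ (t a)² + δ (2 w)²`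
  have hcross : 2 * a * c ≤ δ * t ^ 2 * a ^ 2 + 4 * δ * w ^ 2 := by
    nlinarith [mul_le_mul_of_nonneg_left hc (by positivity : 0 ≤ 2 * a),
      mul_nonneg hδ0 (sq_nonneg (t * a - 2 * w))]
  have hc2 : c ^ 2 ≤ 2 * δ * w ^ 2 := by
    have := mul_le_mul hc hc hc0 (hc0.trans hc)
    nlinarith [mul_le_mul_of_nonneg_left hσ1 (by positivity : 0 ≤ 4 * δ * w ^ 2)]
  nlinarith

section Retraction

variable {E : Type*} [NormedAddCommGroup E] [InnerProductSpace ℝ E]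

noncomputable def shrinkRetraction (p : E → E) (x₀ : E) (δ ε : ℝ) (x : E) : E :=
  x₀ + (1 - shrink δ ε ‖x - p x‖) • (p x - x₀)

namespace IsMetricProj

variable {C : Set E} {p : E → E} {x₀ : E} {δ ε R : ℝ}

theorem shrinkRetraction_mem (hp : IsMetricProj C p) (hconv : Convex ℝ C) (hx₀ : x₀ ∈ C)
    (hδ0 : 0 ≤ δ) (hδ1 : δ ≤ 1) (hε : 0 < ε) (x : E) : shrinkRetraction p x₀ δ ε x ∈ C := by
  have hs1 := (shrink_le hδ0 hε (norm_nonneg (x - p x))).trans hδ1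
  convert hconv hx₀ (hp.mem x) (shrink_nonneg hδ0) (sub_nonneg.2 hs1) (add_sub_cancel _ _)
    using 1
  simp only [shrinkRetraction]
  module

theorem shrinkRetraction_apply_of_mem (hp : IsMetricProj C p) (hε : 0 ≤ ε) {x : E}
    (hx : x ∈ C) : shrinkRetraction p x₀ δ ε x = x := by
  simp [shrinkRetraction, hp.apply_of_mem hx, shrink_zero hε]

theorem norm_shrinkRetraction_sub_le (hp : IsMetricProj C p) (hR : ∀ z ∈ C, ‖z - x₀‖ ≤ R)
    (hδ0 : 0 ≤ δ) (hδ : δ ≤ 1 / 2) (hε : 0 < ε) (hδR : 6 * δ * R ^ 2 ≤ ε ^ 2) {x y : E}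
    (hxy : ‖y - p y‖ ≤ ‖x - p x‖) :
    ‖shrinkRetraction p x₀ δ ε x - shrinkRetraction p x₀ δ ε y‖ ≤ ‖x - y‖ := by
  set t := min ‖x - p x‖ ε / ε
  set b := ‖x - p x‖ - ‖y - p y‖
  set γ := shrink δ ε ‖x - p x‖ - shrink δ ε ‖y - p y‖
  have hR0 : 0 ≤ R := (norm_nonneg _).trans (hR _ (hp.mem x))
  obtain ⟨ht0, ht1⟩ := min_div_mem_Icc hε (norm_nonneg (x - p x))
  have hσ1 : δ * t ^ 2 ≤ 1 := (shrink_le hδ0 hε (norm_nonneg _)).trans (by linarith)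
  have hγ0 : 0 ≤ γ := sub_nonneg.2 (shrink_mono hδ0 hε (norm_nonneg _) hxy)
  have hγ : γ ≤ 2 * δ * t * (b / ε) := shrink_sub_shrink_le hδ0 hε (norm_nonneg _) hxy
  have hdiff : shrinkRetraction p x₀ δ ε x - shrinkRetraction p x₀ δ ε y
      = (1 - δ * t ^ 2) • (p x - p y) - γ • (p y - x₀) := by
    simp only [shrinkRetraction, γ, t, shrink]
    module
  have hnorm : ‖shrinkRetraction p x₀ δ ε x - shrinkRetraction p x₀ δ ε y‖
      ≤ (1 - δ * t ^ 2) * ‖p x - p y‖ + γ * R := by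
    rw [hdiff]
    refine (_root_.norm_sub_le _ _).trans (add_le_add ?_ ?_)
    · rw [norm_smul, Real.norm_of_nonneg (by linarith)]
    · rw [norm_smul, Real.norm_of_nonneg hγ0]
      exact mul_le_mul_of_nonneg_left (hR _ (hp.mem y)) hγ0
  have hw : 6 * δ * (b * R / ε) ^ 2 ≤ b ^ 2 := by
    rw [div_pow, mul_pow, ← mul_div_assoc, div_le_iff₀ (by positivity)]
    nlinarith [mul_le_mul_of_nonneg_left hδR (sq_nonneg b)]
  have hsq := sq_one_sub_mul_add_le (norm_nonneg (p x - p y)) ht0 ht1 hδ0 hδ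
    (mul_nonneg hγ0 hR0) ((mul_le_mul_of_nonneg_right hγ hR0).trans_eq (by ring)) hw
  refine hnorm.trans ((pow_le_pow_iff_left₀ (by positivity) (norm_nonneg _) two_ne_zero).1 ?_)
  exact hsq.trans (hp.sq_norm_sub_add_sq_le x y)

theorem lipschitzWith_shrinkRetraction (hp : IsMetricProj C p) (hR : ∀ z ∈ C, ‖z - x₀‖ ≤ R)
    (hδ0 : 0 ≤ δ) (hδ : δ ≤ 1 / 2) (hε : 0 < ε) (hδR : 6 * δ * R ^ 2 ≤ ε ^ 2) :
    LipschitzWith 1 (shrinkRetraction p x₀ δ ε) := by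
  refine LipschitzWith.of_dist_le_mul fun x y => ?_
  rw [NNReal.coe_one, one_mul, dist_eq_norm, dist_eq_norm]
  rcases le_total ‖y - p y‖ ‖x - p x‖ with h | h
  · exact hp.norm_shrinkRetraction_sub_le hR hδ0 hδ hε hδR h
  · rw [norm_sub_rev, norm_sub_rev x]
    exact hp.norm_shrinkRetraction_sub_le hR hδ0 hδ hε hδR h

theorem lipschitzOnWith_shrinkRetraction_compl_thickening (hp : IsMetricProj C p)
    (hδ1 : δ ≤ 1) (hε : 0 < ε) :
    LipschitzOnWith (1 - δ).toNNReal (shrinkRetraction p x₀ δ ε) (thickening ε C)ᶜ := by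
  have hfar : ∀ x ∉ thickening ε C, shrink δ ε ‖x - p x‖ = δ := fun x hx =>
    shrink_of_le hε.ne' <| not_lt.1 fun h =>
      hx (mem_thickening_iff.2 ⟨p x, hp.mem x, by rwa [dist_eq_norm]⟩)
  refine LipschitzOnWith.of_dist_le_mul fun x hx y hy => ?_
  rw [Real.coe_toNNReal _ (sub_nonneg.2 hδ1), dist_eq_norm, dist_eq_norm]
  have hdiff : shrinkRetraction p x₀ δ ε x - shrinkRetraction p x₀ δ ε y
      = (1 - δ) • (p x - p y) := by
    simp only [shrinkRetraction, hfar x hx, hfar y hy]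
    module
  rw [hdiff, norm_smul, Real.norm_of_nonneg (sub_nonneg.2 hδ1)]
  exact mul_le_mul_of_nonneg_left (hp.norm_sub_le x y) (sub_nonneg.2 hδ1)

end IsMetricProj

end Retraction

theorem stmt0_general (n : ℕ) (C : Set (EuclideanSpace ℝ (Fin n)))
    (hCcomp : IsCompact C) (hCconv : Convex ℝ C) (hCint : (interior C).Nonempty)
    (d : ℕ) (ε : ℝ) (hε : 0 < ε) :
    ∃ δ ∈ Set.Ioo (0 : ℝ) 1,
      ∃ f : EuclideanSpace ℝ (Fin n) → EuclideanSpace ℝ (Fin n),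
        Set.range f ⊆ C ∧ (∀ x ∈ C, f x = x) ∧ LipschitzWith 1 f ∧
        ∀ E : Set (EuclideanSpace ℝ (Fin n)), E ∩ Metric.thickening ε C = ∅ →
          μH[(d : ℝ)] (f '' E) ≤ ENNReal.ofReal ((1 - δ) ^ d) * μH[(d : ℝ)] E := by
  obtain ⟨x₀, hx₀⟩ := hCint.mono interior_subset
  obtain ⟨p, hp⟩ := exists_isMetricProj ⟨x₀, hx₀⟩ hCcomp.isComplete hCconv
  have hR : ∀ z ∈ C, ‖z - x₀‖ ≤ diam C := fun z hz =>
    dist_eq_norm z x₀ ▸ dist_le_diam_of_mem hCcomp.isBounded hz hx₀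
  -- `δ (6 R² + 2 ε²) = ε²` gives both `δ ≤ 1/2` and `6 δ R² ≤ ε²`.
  set δ := ε ^ 2 / (6 * diam C ^ 2 + 2 * ε ^ 2)
  have hδε : δ * (6 * diam C ^ 2 + 2 * ε ^ 2) = ε ^ 2 := div_mul_cancel₀ _ (by positivity)
  have hδ0 : 0 < δ := by positivity
  have hδ : δ ≤ 1 / 2 := by nlinarith [mul_nonneg hδ0.le (sq_nonneg (diam C)), pow_pos hε 2]
  have hδ1 : δ ≤ 1 := by linarith
  have hδR : 6 * δ * diam C ^ 2 ≤ ε ^ 2 := by nlinarith [pow_pos hε 2]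
  refine ⟨δ, ⟨hδ0, by linarith⟩, shrinkRetraction p x₀ δ ε, ?_,
    fun x hx => hp.shrinkRetraction_apply_of_mem hε.le hx,
    hp.lipschitzWith_shrinkRetraction hR hδ0.le hδ hε hδR, fun E hE => ?_⟩
  · rintro _ ⟨x, rfl⟩
    exact hp.shrinkRetraction_mem hCconv hx₀ hδ0.le hδ1 hε x
  · have hEfar : E ⊆ (thickening ε C)ᶜ := fun x hx hxC => hE.subset ⟨hx, hxC⟩
    have := ((hp.lipschitzOnWith_shrinkRetraction_compl_thickening (x₀ := x₀) hδ1 hε).mono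
      hEfar).hausdorffMeasure_image_le (Nat.cast_nonneg d)
    rw [ENNReal.ofReal_pow (sub_nonneg.2 hδ1)]
    rwa [ENNReal.rpow_natCast] at this

/-- Paper's Corollary 4.42.  Let `C ⊆ ℝⁿ` be a compact convex set with
nonempty interior, `d` a natural number.  For every `ε > 0` there exist `δ ∈ (0,1)` and a
map `f : ℝⁿ → ℝⁿ` with range contained in `C`, fixing `C` pointwise, `1`-Lipschitz, such
that for every set `E` disjoint from the open `ε`-neighborhood of `C`,
`H^d(f(E)) ≤ (1 − δ)^d · H^d(E)`. -/
theorem stmt0 (n : ℕ) (hn : 1 ≤ n) (C : Set (EuclideanSpace ℝ (Fin n)))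
    (hCcomp : IsCompact C) (hCconv : Convex ℝ C) (hCint : (interior C).Nonempty)
    (d : ℕ) (ε : ℝ) (hε : 0 < ε) :
    ∃ δ ∈ Set.Ioo (0 : ℝ) 1,
      ∃ f : EuclideanSpace ℝ (Fin n) → EuclideanSpace ℝ (Fin n),
        Set.range f ⊆ C ∧ (∀ x ∈ C, f x = x) ∧ LipschitzWith 1 f ∧
        ∀ E : Set (EuclideanSpace ℝ (Fin n)), E ∩ Metric.thickening ε C = ∅ →
          μH[(d : ℝ)] (f '' E) ≤ ENNReal.ofReal ((1 - δ) ^ d) * μH[(d : ℝ)] E :=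
  stmt0_general n C hCcomp hCconv hCint d ε hε
end

section
/- Let n ≥ 1 and let C ⊆ ℝ^n be a compact convex set with 0 in its interior. Then for every ε > 0 there exist real numbers a > 0 and b > 0 such that C ⊆ {x ∈ ℝ^n : gauge C x + a·‖x‖ ≤ b} ⊆ B(C,ε). (Claim (4.41) in the proof of Lemma 4.31: the sublevel sets of the perturbed gauge squeeze between C and its ε-neighborhood.) -/
/-! Put `b = 1 + a R`, where `C ⊆ closedBall 0 R`. On `C` we have `gauge C ≤ 1` and `‖x‖ ≤ R`, so
`C` lies in the sublevel set. Conversely, a point of the sublevel set has `gauge C x ≤ b`, so it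
is `b • y` for some `y ∈ C` (as `C` is closed), at distance `(b - 1) ‖y‖ ≤ a R²` from `y`; taking
`a R² < ε` finishes the proof. -/

open Metric Pointwise

section NormedSpace

variable {E : Type*} [NormedAddCommGroup E] [NormedSpace ℝ E] {s : Set E}

theorem mem_smul_of_gauge_le (hc : Convex ℝ s) (hs₀ : s ∈ nhds 0) (hs : IsClosed s) {b : ℝ}
    (hb : 0 < b) {x : E} (hx : gauge s x ≤ b) : x ∈ b • s := by
  rw [Set.mem_smul_set_iff_inv_smul_mem₀ hb.ne', ← hs.closure_eq,
    ← gauge_le_one_iff_mem_closure hc hs₀, gauge_smul_of_nonneg (inv_nonneg.2 hb.le),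
    smul_eq_mul, inv_mul_le_iff₀ hb, mul_one]
  exact hx

theorem smul_set_subset_cthickening {R : ℝ} (hR : s ⊆ closedBall 0 R) {b : ℝ} (hb : 1 ≤ b) :
    b • s ⊆ cthickening ((b - 1) * R) s := by
  rintro _ ⟨y, hy, rfl⟩
  refine mem_cthickening_of_dist_le _ y _ _ hy ?_
  have hyR : ‖y‖ ≤ R := mem_closedBall_zero_iff.1 (hR hy)
  calc dist (b • y) y = (b - 1) * ‖y‖ := by
        rw [dist_eq_norm, ← Real.norm_of_nonneg (sub_nonneg.2 hb), ← norm_smul, sub_smul, one_smul]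
    _ ≤ (b - 1) * R := mul_le_mul_of_nonneg_left hyR (sub_nonneg.2 hb)

theorem subset_setOf_gauge_add_mul_norm_le {R : ℝ} (hR : s ⊆ closedBall 0 R) {a : ℝ}
    (ha : 0 ≤ a) : s ⊆ {x | gauge s x + a * ‖x‖ ≤ 1 + a * R} := fun _ hx ↦
  add_le_add (gauge_le_one_of_mem hx)
    (mul_le_mul_of_nonneg_left (mem_closedBall_zero_iff.1 (hR hx)) ha)

theorem setOf_gauge_add_mul_norm_le_subset_cthickening (hc : Convex ℝ s) (hs₀ : s ∈ nhds 0)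
    (hs : IsClosed s) {R : ℝ} (hR : s ⊆ closedBall 0 R) {a : ℝ} (ha : 0 ≤ a) :
    {x | gauge s x + a * ‖x‖ ≤ 1 + a * R} ⊆ cthickening (a * R ^ 2) s := by
  intro x hx
  have hR₀ : 0 ≤ R := by simpa using hR (mem_of_mem_nhds hs₀)
  have hb : 1 ≤ 1 + a * R := le_add_of_nonneg_right (mul_nonneg ha hR₀)
  have hgauge : gauge s x ≤ 1 + a * R :=
    le_trans (le_add_of_nonneg_right (by positivity)) hx
  convert smul_set_subset_cthickening hR hb
    (mem_smul_of_gauge_le hc hs₀ hs (by linarith) hgauge) using 2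
  ring

end NormedSpace

theorem stmt1_general (n : ℕ) (C : Set (EuclideanSpace ℝ (Fin n)))
    (hCcomp : IsCompact C) (hCconv : Convex ℝ C)
    (h0 : (0 : EuclideanSpace ℝ (Fin n)) ∈ interior C)
    (ε : ℝ) (hε : 0 < ε) :
    ∃ a > (0 : ℝ), ∃ b > (0 : ℝ),
      C ⊆ {x : EuclideanSpace ℝ (Fin n) | gauge C x + a * ‖x‖ ≤ b} ∧
      {x : EuclideanSpace ℝ (Fin n) | gauge C x + a * ‖x‖ ≤ b} ⊆ Metric.thickening ε C := by
  obtain ⟨R, hR₀, hR⟩ := hCcomp.isBounded.subset_closedBall_lt 0 0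
  set a := ε / (2 * R ^ 2)
  have ha : 0 < a := by positivity
  have haR : a * R ^ 2 = ε / 2 := by simp only [a]; field_simp
  refine ⟨a, ha, 1 + a * R, by positivity, subset_setOf_gauge_add_mul_norm_le hR ha.le, ?_⟩
  calc _ ⊆ cthickening (a * R ^ 2) C :=
        setOf_gauge_add_mul_norm_le_subset_cthickening hCconv (mem_interior_iff_mem_nhds.1 h0)
          hCcomp.isClosed hR ha.le
    _ ⊆ thickening ε C := cthickening_subset_thickening' hε (by linarith) C

/-- claim (4.41) in the proof of Lemma 4.31.  Let `C ⊆ ℝⁿ` be a compact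
convex set with `0` in its interior.  For every `ε > 0` there exist `a, b > 0` such that
`C ⊆ {x : gauge C x + a‖x‖ ≤ b} ⊆ B(C, ε)`. -/
theorem stmt1 (n : ℕ) (hn : 1 ≤ n) (C : Set (EuclideanSpace ℝ (Fin n)))
    (hCcomp : IsCompact C) (hCconv : Convex ℝ C)
    (h0 : (0 : EuclideanSpace ℝ (Fin n)) ∈ interior C)
    (ε : ℝ) (hε : 0 < ε) :
    ∃ a > (0 : ℝ), ∃ b > (0 : ℝ),
      C ⊆ {x : EuclideanSpace ℝ (Fin n) | gauge C x + a * ‖x‖ ≤ b} ∧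
      {x : EuclideanSpace ℝ (Fin n) | gauge C x + a * ‖x‖ ≤ b} ⊆ Metric.thickening ε C :=
  stmt1_general n C hCcomp hCconv h0 ε hε
end

section
/- Let n ≥ 1, let C ⊆ ℝ^n be a compact convex set with 0 in its interior, and let a, b > 0. Define C_{a,b} = {x ∈ ℝ^n : gauge C x + a·‖x‖ ≤ b}. Then C_{a,b} is a compact convex set, and there exists M > 0 such that for all x, y in the frontier of C_{a,b} with ⟨x,y⟩ > 0 (i.e. the angle between x and y is less than π/2), the closed ball of center (x+y)/2 and radius M·‖x−y‖² is contained in C_{a,b}. (Claim (4.36) in the proof of Lemma 4.31: quantitative uniform convexity of the sets C_{a,b}.) -/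
open scoped RealInnerProductSpace NNReal Topology
open Metric

/-!
Write `F = gauge C + a‖·‖`. At the midpoint of two points `x, y` of the level set `{F = b}`,
subadditivity of the gauge leaves a deficit `(a/2)(‖x‖ + ‖y‖ - ‖x + y‖)`, and for `x, y` in the
ball of radius `R = b/a` this defect of the triangle inequality dominates
`(‖x‖‖y‖ - ⟪x, y⟫)/(2R)`. Comparing `F` at `‖y‖ • x` and `‖x‖ • y` (homogeneity plus Lipschitz
continuity) bounds `(‖x‖ - ‖y‖)²` by the same quantity, hence `‖x - y‖² ≲ ‖x‖ + ‖y‖ - ‖x + y‖`.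
Lipschitz continuity of `F` turns the deficit at the midpoint into a ball of radius
`≍ ‖x - y‖²` inside `{F ≤ b}`.
-/

section Gauge

variable {E : Type*} [NormedAddCommGroup E] [NormedSpace ℝ E] {C : Set E}

lemma convexOn_gauge (hC : Convex ℝ C) (hCa : Absorbent ℝ C) : ConvexOn ℝ Set.univ (gauge C) :=
  ⟨convex_univ, fun x _ y _ α β hα hβ _ => by
    simpa only [gauge_smul_of_nonneg hα, gauge_smul_of_nonneg hβ, smul_eq_mul]
      using gauge_add_le hC hCa (α • x) (β • y)⟩

lemma convex_setOf_gauge_add_mul_norm_le (hC : Convex ℝ C) (hCa : Absorbent ℝ C) {a : ℝ}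
    (ha : 0 ≤ a) (b : ℝ) : Convex ℝ {z | gauge C z + a * ‖z‖ ≤ b} := by
  simpa using ((convexOn_gauge hC hCa).add ((convexOn_norm convex_univ).smul ha)).convex_le b

lemma continuous_gauge_add_mul_norm (hC : Convex ℝ C) (h0 : C ∈ 𝓝 0) (a : ℝ) :
    Continuous fun z => gauge C z + a * ‖z‖ :=
  (continuous_gauge hC h0).add (continuous_const.mul continuous_norm)

lemma isCompact_setOf_gauge_add_mul_norm_le [ProperSpace E] (hC : Convex ℝ C) (h0 : C ∈ 𝓝 0)
    {a : ℝ} (ha : 0 < a) (b : ℝ) : IsCompact {z | gauge C z + a * ‖z‖ ≤ b} := by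
  refine isCompact_of_isClosed_isBounded
    (isClosed_le (continuous_gauge_add_mul_norm hC h0 a) continuous_const)
    ((isBounded_closedBall (x := 0) (r := b / a)).subset fun z hz => ?_)
  rw [mem_closedBall_zero_iff, le_div_iff₀' ha]
  linarith [gauge_nonneg (s := C) z, hz.out]

lemma gauge_add_mul_norm_smul (a : ℝ) {t : ℝ} (ht : 0 ≤ t) (z : E) :
    gauge C (t • z) + a * ‖t • z‖ = t * (gauge C z + a * ‖z‖) := by
  rw [gauge_smul_of_nonneg ht, smul_eq_mul, norm_smul, Real.norm_of_nonneg ht]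
  ring

lemma gauge_midpoint_add_mul_norm_le (hC : Convex ℝ C) (hCa : Absorbent ℝ C) (a : ℝ) (x y : E) :
    gauge C (midpoint ℝ x y) + a * ‖midpoint ℝ x y‖ ≤
      (gauge C x + a * ‖x‖ + (gauge C y + a * ‖y‖)) / 2 - a / 2 * (‖x‖ + ‖y‖ - ‖x + y‖) := by
  rw [midpoint_eq_smul_add, invOf_eq_inv, gauge_smul_of_nonneg (by norm_num), norm_smul,
    Real.norm_of_nonneg (by norm_num), smul_eq_mul]
  linarith [gauge_add_le hC hCa x y]

lemma Convex.exists_lipschitzWith_gauge_add_mul_norm (hC : Convex ℝ C) (h0 : C ∈ 𝓝 0) (a : ℝ) :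
    ∃ L : ℝ≥0, a ≤ L ∧ LipschitzWith L fun z => gauge C z + a * ‖z‖ := by
  obtain ⟨K, hK⟩ := hC.lipschitz_gauge h0
  refine ⟨K + ‖a‖₊, ?_, ?_⟩
  · push_cast
    linarith [le_abs_self a, Real.norm_eq_abs a, K.2]
  · simpa using hK.add ((lipschitzWith_smul a).comp lipschitzWith_one_norm)

end Gauge

section InnerProduct

variable {E : Type*} [NormedAddCommGroup E] [InnerProductSpace ℝ E]

lemma norm_sub_sq_eq_sq_sub_norm_add (x y : E) :
    ‖x - y‖ ^ 2 = (‖x‖ - ‖y‖) ^ 2 + 2 * (‖x‖ * ‖y‖ - ⟪x, y⟫) := by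
  rw [norm_sub_sq_real]
  ring

lemma norm_mul_norm_sub_inner_le {x y : E} {R : ℝ} (hx : ‖x‖ ≤ R) (hy : ‖y‖ ≤ R) :
    ‖x‖ * ‖y‖ - ⟪x, y⟫ ≤ 2 * R * (‖x‖ + ‖y‖ - ‖x + y‖) := by
  have hsq : (‖x‖ + ‖y‖) ^ 2 - ‖x + y‖ ^ 2 = 2 * (‖x‖ * ‖y‖ - ⟪x, y⟫) := by
    rw [norm_add_sq_real]
    ring
  nlinarith [mul_nonneg (sub_nonneg.2 (norm_add_le x y))
    (by linarith [norm_add_le x y] : 0 ≤ 4 * R - (‖x‖ + ‖y‖ + ‖x + y‖))]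

lemma norm_smul_sub_smul_sq (x y : E) :
    ‖‖y‖ • x - ‖x‖ • y‖ ^ 2 = 2 * (‖x‖ * ‖y‖) * (‖x‖ * ‖y‖ - ⟪x, y⟫) := by
  rw [norm_sub_sq_real, norm_smul, norm_smul, real_inner_smul_left, real_inner_smul_right,
    Real.norm_of_nonneg (norm_nonneg _), Real.norm_of_nonneg (norm_nonneg _)]
  ring

variable {f : E → ℝ} {L : ℝ≥0} {b : ℝ}

lemma sq_mul_sq_norm_sub_norm_le (hf : LipschitzWith L f)
    (hhom : ∀ t : ℝ, 0 ≤ t → ∀ z, f (t • z) = t * f z) {x y : E} (hx : f x = b) (hy : f y = b) :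
    b ^ 2 * (‖x‖ - ‖y‖) ^ 2 ≤ 2 * L ^ 2 * (‖x‖ * ‖y‖) * (‖x‖ * ‖y‖ - ⟪x, y⟫) := by
  have h := hf.dist_le_mul (‖y‖ • x) (‖x‖ • y)
  rw [Real.dist_eq, dist_eq_norm, hhom _ (norm_nonneg _), hhom _ (norm_nonneg _), hx, hy] at h
  calc b ^ 2 * (‖x‖ - ‖y‖) ^ 2 = |‖y‖ * b - ‖x‖ * b| ^ 2 := by rw [sq_abs]; ring
    _ ≤ (L * ‖‖y‖ • x - ‖x‖ • y‖) ^ 2 := pow_le_pow_left₀ (abs_nonneg _) h 2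
    _ = _ := by rw [mul_pow, norm_smul_sub_smul_sq]; ring

lemma sq_mul_norm_sub_sq_le (hf : LipschitzWith L f)
    (hhom : ∀ t : ℝ, 0 ≤ t → ∀ z, f (t • z) = t * f z) {x y : E} (hx : f x = b) (hy : f y = b)
    {R : ℝ} (hxR : ‖x‖ ≤ R) (hyR : ‖y‖ ≤ R) :
    b ^ 2 * ‖x - y‖ ^ 2 ≤ 4 * R * (L ^ 2 * R ^ 2 + b ^ 2) * (‖x‖ + ‖y‖ - ‖x + y‖) := by
  have hD : 0 ≤ ‖x‖ * ‖y‖ - ⟪x, y⟫ := sub_nonneg.2 (real_inner_le_norm x y)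
  have hxy : ‖x‖ * ‖y‖ ≤ R ^ 2 := by
    rw [sq]
    exact mul_le_mul hxR hyR (norm_nonneg y) ((norm_nonneg x).trans hxR)
  calc b ^ 2 * ‖x - y‖ ^ 2
      = b ^ 2 * (‖x‖ - ‖y‖) ^ 2 + 2 * b ^ 2 * (‖x‖ * ‖y‖ - ⟪x, y⟫) := by
        rw [norm_sub_sq_eq_sq_sub_norm_add]; ring
    _ ≤ 2 * L ^ 2 * R ^ 2 * (‖x‖ * ‖y‖ - ⟪x, y⟫) + 2 * b ^ 2 * (‖x‖ * ‖y‖ - ⟪x, y⟫) := by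
        gcongr ?_ + _
        exact (sq_mul_sq_norm_sub_norm_le hf hhom hx hy).trans (by gcongr)
    _ = 2 * (L ^ 2 * R ^ 2 + b ^ 2) * (‖x‖ * ‖y‖ - ⟪x, y⟫) := by ring
    _ ≤ 2 * (L ^ 2 * R ^ 2 + b ^ 2) * (2 * R * (‖x‖ + ‖y‖ - ‖x + y‖)) := by
        gcongr
        exact norm_mul_norm_sub_inner_le hxR hyR
    _ = _ := by ring

variable {C : Set E}

theorem exists_closedBall_midpoint_subset_setOf_gauge_add_mul_norm_le (hC : Convex ℝ C)
    (h0 : C ∈ 𝓝 0) {a : ℝ} (ha : 0 < a) (hb : 0 < b) :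
    ∃ M > 0, ∀ x y, gauge C x + a * ‖x‖ = b → gauge C y + a * ‖y‖ = b →
      closedBall (midpoint ℝ x y) (M * ‖x - y‖ ^ 2) ⊆ {z | gauge C z + a * ‖z‖ ≤ b} := by
  obtain ⟨L, haL, hL⟩ := hC.exists_lipschitzWith_gauge_add_mul_norm h0 a
  have hL0 : 0 < (L : ℝ) := ha.trans_le haL
  set R := b / a
  have hR : 0 < R := div_pos hb ha
  have hnorm_le : ∀ z, gauge C z + a * ‖z‖ = b → ‖z‖ ≤ R := fun z hz => by
    rw [le_div_iff₀' ha]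
    linarith [gauge_nonneg (s := C) z]
  set c := 8 * R * (L ^ 2 * R ^ 2 + b ^ 2)
  have hc : 0 < c := by positivity
  refine ⟨a * b ^ 2 / (L * c), by positivity, fun x y hx hy z hz => ?_⟩
  have hgap := sq_mul_norm_sub_sq_le hL (fun t ht z => gauge_add_mul_norm_smul a ht z) hx hy
    (hnorm_le x hx) (hnorm_le y hy)
  have hmid := gauge_midpoint_add_mul_norm_le hC (absorbent_nhds_zero h0) a x y
  have hLM : L * (a * b ^ 2 / (L * c) * ‖x - y‖ ^ 2) ≤ a / 2 * (‖x‖ + ‖y‖ - ‖x + y‖) :=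
    calc L * (a * b ^ 2 / (L * c) * ‖x - y‖ ^ 2) = a / c * (b ^ 2 * ‖x - y‖ ^ 2) := by
          field_simp
      _ ≤ a / c * (4 * R * (L ^ 2 * R ^ 2 + b ^ 2) * (‖x‖ + ‖y‖ - ‖x + y‖)) := by gcongr
      _ = a / 2 * (‖x‖ + ‖y‖ - ‖x + y‖) := by field_simp; ring
  calc gauge C z + a * ‖z‖
      ≤ gauge C (midpoint ℝ x y) + a * ‖midpoint ℝ x y‖ + L * dist z (midpoint ℝ x y) := by
        linarith [(abs_le.1 (hL.dist_le_mul z (midpoint ℝ x y))).2]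
    _ ≤ gauge C (midpoint ℝ x y) + a * ‖midpoint ℝ x y‖ +
          L * (a * b ^ 2 / (L * c) * ‖x - y‖ ^ 2) := by
        gcongr
        exact mem_closedBall.1 hz
    _ ≤ b := by linarith

end InnerProduct

theorem stmt2_general (n : ℕ) (C : Set (EuclideanSpace ℝ (Fin n)))
    (hCconv : Convex ℝ C)
    (h0 : (0 : EuclideanSpace ℝ (Fin n)) ∈ interior C)
    (a b : ℝ) (ha : 0 < a) (hb : 0 < b) :
    IsCompact {z : EuclideanSpace ℝ (Fin n) | gauge C z + a * ‖z‖ ≤ b} ∧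
    Convex ℝ {z : EuclideanSpace ℝ (Fin n) | gauge C z + a * ‖z‖ ≤ b} ∧
    ∃ M > (0 : ℝ),
      ∀ x ∈ frontier {z : EuclideanSpace ℝ (Fin n) | gauge C z + a * ‖z‖ ≤ b},
      ∀ y ∈ frontier {z : EuclideanSpace ℝ (Fin n) | gauge C z + a * ‖z‖ ≤ b},
        0 < ⟪x, y⟫ →
        Metric.closedBall (midpoint ℝ x y) (M * ‖x - y‖ ^ 2) ⊆
          {z : EuclideanSpace ℝ (Fin n) | gauge C z + a * ‖z‖ ≤ b} := by
  have hC0 : C ∈ 𝓝 0 := mem_interior_iff_mem_nhds.mp h0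
  have hfrontier : frontier {z : EuclideanSpace ℝ (Fin n) | gauge C z + a * ‖z‖ ≤ b} ⊆
      {z | gauge C z + a * ‖z‖ = b} :=
    frontier_le_subset_eq (continuous_gauge_add_mul_norm hCconv hC0 a) continuous_const
  obtain ⟨M, hM, hball⟩ :=
    exists_closedBall_midpoint_subset_setOf_gauge_add_mul_norm_le hCconv hC0 ha hb
  exact ⟨isCompact_setOf_gauge_add_mul_norm_le hCconv hC0 ha b,
    convex_setOf_gauge_add_mul_norm_le hCconv (absorbent_nhds_zero hC0) ha.le b,
    M, hM, fun x hx y hy _ => hball x y (hfrontier hx) (hfrontier hy)⟩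

/-- claim (4.36) in the proof of Lemma 4.31.  Let `C ⊆ ℝⁿ` be a compact
convex set with `0` in its interior and `a, b > 0`.  Then
`C_{a,b} = {x : gauge C x + a‖x‖ ≤ b}` is a compact convex set, and there is `M > 0` such
that for all `x, y` in the frontier of `C_{a,b}` with `⟪x, y⟫ > 0`, the closed ball of
center `(x+y)/2` and radius `M‖x−y‖²` is contained in `C_{a,b}`. -/
theorem stmt2 (n : ℕ) (hn : 1 ≤ n) (C : Set (EuclideanSpace ℝ (Fin n)))
    (hCcomp : IsCompact C) (hCconv : Convex ℝ C)
    (h0 : (0 : EuclideanSpace ℝ (Fin n)) ∈ interior C)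
    (a b : ℝ) (ha : 0 < a) (hb : 0 < b) :
    IsCompact {z : EuclideanSpace ℝ (Fin n) | gauge C z + a * ‖z‖ ≤ b} ∧
    Convex ℝ {z : EuclideanSpace ℝ (Fin n) | gauge C z + a * ‖z‖ ≤ b} ∧
    ∃ M > (0 : ℝ),
      ∀ x ∈ frontier {z : EuclideanSpace ℝ (Fin n) | gauge C z + a * ‖z‖ ≤ b},
      ∀ y ∈ frontier {z : EuclideanSpace ℝ (Fin n) | gauge C z + a * ‖z‖ ≤ b},
        0 < ⟪x, y⟫ →
        Metric.closedBall (midpoint ℝ x y) (M * ‖x - y‖ ^ 2) ⊆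
          {z : EuclideanSpace ℝ (Fin n) | gauge C z + a * ‖z‖ ≤ b} :=
  stmt2_general n C hCconv h0 a b ha hb
end

section
/- Let n ≥ 1 and let K ⊆ ℝ^n be a compact convex set with nonempty interior such that for some M > 0 and all x, y in the frontier of K, the closed ball of center (x+y)/2 and radius M·‖x−y‖² is contained in K. Let π : ℝ^n → K denote the metric projection onto K, i.e. π(w) is the unique point of K with ‖w − π(w)‖ = dist(w, K) (which exists by the Hilbert projection theorem). Then for every ε > 0 there exists δ ∈ (0,1) such that for all w, v ∈ ℝ^n with dist(w,K) ≥ ε and dist(v,K) ≥ ε one has ‖π(w) − π(v)‖ ≤ (1 − δ)·‖w − v‖. (Claim (4.40) in the proof of Lemma 4.31: the nearest-point projection onto a uniformly convex compact body is uniformly contracting outside any neighborhood of the body.) -/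
open scoped RealInnerProductSpace

/-!
Let `p = π w` and `q = π v`. Since `w ∉ K`, the vector `w - p` is a nonzero outer normal of `K`
at `p`, so `p` lies on the frontier, and likewise `q`. Uniform convexity puts the point
`(p + q)/2 + M‖p - q‖² (w - p)/‖w - p‖` in `K`; testing the variational inequality at `p`
against it gives `⟪w - p, p - q⟫ ≥ 2M‖p - q‖²‖w - p‖ ≥ 2Mε‖p - q‖²`, and symmetrically at `q`.
Adding the two, `⟪w - v, p - q⟫ ≥ (1 + 4Mε)‖p - q‖²`, and Cauchy–Schwarz yields
`‖p - q‖ ≤ (1 + 4Mε)⁻¹‖w - v‖`.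
-/

section

variable {E : Type*} [NormedAddCommGroup E] [InnerProductSpace ℝ E] {K : Set E}

lemma Convex.inner_sub_nonpos_of_norm_eq_infDist (hK : Convex ℝ K) {w p : E} (hp : p ∈ K)
    (hd : ‖w - p‖ = Metric.infDist w K) : ∀ z ∈ K, ⟪w - p, z - p⟫ ≤ 0 := by
  rw [Metric.infDist_eq_iInf] at hd
  simp only [dist_eq_norm] at hd
  exact (norm_eq_iInf_iff_real_inner_le_zero hK hp).mp hd

lemma mem_frontier_of_inner_sub_nonpos {p v : E} (hp : p ∈ K) (hv : v ≠ 0)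
    (hmax : ∀ z ∈ K, ⟪v, z - p⟫ ≤ 0) : p ∈ frontier K := by
  refine ⟨subset_closure hp, fun hint => hv ?_⟩
  have hloc : IsLocalMax (fun z => ⟪v, z⟫) p :=
    Filter.mem_of_superset (mem_interior_iff_mem_nhds.mp hint) fun z hz => by
      simpa [inner_sub_right, sub_nonpos] using hmax z hz
  have hzero := hloc.hasFDerivAt_eq_zero (innerSL ℝ v).hasFDerivAt
  simpa using congr($hzero v)

lemma inner_sub_le_of_closedBall_midpoint_subset {p q v : E} {r : ℝ} (hr : 0 ≤ r)
    (hmax : ∀ z ∈ K, ⟪v, z - p⟫ ≤ 0) (hball : Metric.closedBall (midpoint ℝ p q) r ⊆ K) :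
    ⟪v, q - p⟫ ≤ -(2 * r * ‖v‖) := by
  rcases eq_or_ne v 0 with rfl | hv
  · simp
  have hv' : 0 < ‖v‖ := norm_pos_iff.mpr hv
  set z := midpoint ℝ p q + (r / ‖v‖) • v
  have hz : z ∈ K := hball <| by
    rw [Metric.mem_closedBall, dist_eq_norm, add_sub_cancel_left, norm_smul, Real.norm_eq_abs,
      abs_of_nonneg (by positivity), div_mul_cancel₀ _ hv'.ne']
  have hzp : z - p = (2 : ℝ)⁻¹ • (q - p) + (r / ‖v‖) • v := by
    simp only [z, midpoint_eq_smul_add, invOf_eq_inv]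
    module
  have hnormal := hmax z hz
  rw [hzp, inner_add_right, real_inner_smul_right, real_inner_smul_right,
    real_inner_self_eq_norm_sq, div_mul_eq_mul_div, pow_two, ← mul_assoc,
    mul_div_cancel_right₀ _ hv'.ne'] at hnormal
  linarith

lemma norm_le_inv_mul_norm_of_mul_sq_le_inner {c : ℝ} (hc : 0 < c) {a u : E}
    (h : c * ‖u‖ ^ 2 ≤ ⟪a, u⟫) : ‖u‖ ≤ c⁻¹ * ‖a‖ := by
  rw [le_inv_mul_iff₀ hc]
  rcases (norm_nonneg u).eq_or_lt with hu | hu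
  · rw [← hu, mul_zero]
    exact norm_nonneg a
  · exact le_of_mul_le_mul_right (by nlinarith [real_inner_le_norm a u]) hu

lemma inner_sub_projection_le_of_uniformlyConvex (hK : Convex ℝ K) {M : ℝ} (hM : 0 ≤ M)
    (huc : ∀ x ∈ frontier K, ∀ y ∈ frontier K,
      Metric.closedBall (midpoint ℝ x y) (M * ‖x - y‖ ^ 2) ⊆ K)
    {w p q : E} (hp : p ∈ K) (hd : ‖w - p‖ = Metric.infDist w K) (hq : q ∈ frontier K) :
    ⟪w - p, q - p⟫ ≤ -(2 * (M * ‖p - q‖ ^ 2) * ‖w - p‖) := by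
  have hnormal := hK.inner_sub_nonpos_of_norm_eq_infDist hp hd
  rcases eq_or_ne (w - p) 0 with hwp | hwp
  · simp [hwp]
  exact inner_sub_le_of_closedBall_midpoint_subset (by positivity) hnormal
    (huc p (mem_frontier_of_inner_sub_nonpos hp hwp hnormal) q hq)

end

theorem stmt3_general (n : ℕ) (K : Set (EuclideanSpace ℝ (Fin n)))
    (hKconv : Convex ℝ K)
    (M : ℝ) (hM : 0 < M)
    (huc : ∀ x ∈ frontier K, ∀ y ∈ frontier K,
      Metric.closedBall (midpoint ℝ x y) (M * ‖x - y‖ ^ 2) ⊆ K)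
    (π : EuclideanSpace ℝ (Fin n) → EuclideanSpace ℝ (Fin n))
    (hπmem : ∀ w, π w ∈ K)
    (hπdist : ∀ w, ‖w - π w‖ = Metric.infDist w K) :
    ∀ ε > (0 : ℝ), ∃ δ ∈ Set.Ioo (0 : ℝ) 1,
      ∀ w v : EuclideanSpace ℝ (Fin n),
        ε ≤ Metric.infDist w K → ε ≤ Metric.infDist v K →
        ‖π w - π v‖ ≤ (1 - δ) * ‖w - v‖ := by
  intro ε hε
  have hc : 1 < 1 + 4 * M * ε := by nlinarith
  refine ⟨1 - (1 + 4 * M * ε)⁻¹, ⟨sub_pos.mpr (inv_lt_one_of_one_lt₀ hc),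
    sub_lt_self _ (by positivity)⟩, fun w v hw hv => ?_⟩
  rw [sub_sub_cancel]
  have hfar : ∀ u, ε ≤ Metric.infDist u K → π u ∈ frontier K ∧ ε ≤ ‖u - π u‖ := fun u hu =>
    have hε' : ε ≤ ‖u - π u‖ := (hπdist u).symm ▸ hu
    ⟨mem_frontier_of_inner_sub_nonpos (hπmem u) (norm_pos_iff.mp (hε.trans_le hε'))
      (hKconv.inner_sub_nonpos_of_norm_eq_infDist (hπmem u) (hπdist u)), hε'⟩
  obtain ⟨hpf, hwp⟩ := hfar w hw
  obtain ⟨hqf, hvq⟩ := hfar v hv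
  have hp := inner_sub_projection_le_of_uniformlyConvex hKconv hM.le huc (hπmem w) (hπdist w) hqf
  have hq := inner_sub_projection_le_of_uniformlyConvex hKconv hM.le huc (hπmem v) (hπdist v) hpf
  apply norm_le_inv_mul_norm_of_mul_sq_le_inner (by positivity)
  have hsplit : ⟪w - v, π w - π v⟫ =
      ‖π w - π v‖ ^ 2 - ⟪w - π w, π v - π w⟫ - ⟪v - π v, π w - π v⟫ := by
    rw [← real_inner_self_eq_norm_sq, ← neg_sub (π w) (π v), inner_neg_right, sub_neg_eq_add,
      ← inner_add_left, ← inner_sub_left]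
    congr 1
    abel
  rw [hsplit]
  rw [norm_sub_rev (π v)] at hq
  have hr : 0 ≤ M * ‖π w - π v‖ ^ 2 := by positivity
  nlinarith [mul_le_mul_of_nonneg_left hwp hr, mul_le_mul_of_nonneg_left hvq hr]

/-- claim (4.40) in the proof of Lemma 4.31.  Let `K ⊆ ℝⁿ` be a compact
convex set with nonempty interior which is uniformly convex in the quantitative sense:
for some `M > 0` and all `x, y` in the frontier of `K`, the closed ball centered at the
midpoint of `x, y` with radius `M‖x−y‖²` is contained in `K`.  Let `π` be the metric
projection onto `K` (characterized by `π w ∈ K` and `‖w − π w‖ = dist(w, K)`).  Then for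
every `ε > 0` there is `δ ∈ (0,1)` such that `π` is `(1−δ)`-contracting on the set of
points at distance at least `ε` from `K`. -/
theorem stmt3 (n : ℕ) (hn : 1 ≤ n) (K : Set (EuclideanSpace ℝ (Fin n)))
    (hKcomp : IsCompact K) (hKconv : Convex ℝ K) (hKint : (interior K).Nonempty)
    (M : ℝ) (hM : 0 < M)
    (huc : ∀ x ∈ frontier K, ∀ y ∈ frontier K,
      Metric.closedBall (midpoint ℝ x y) (M * ‖x - y‖ ^ 2) ⊆ K)
    (π : EuclideanSpace ℝ (Fin n) → EuclideanSpace ℝ (Fin n))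
    (hπmem : ∀ w, π w ∈ K)
    (hπdist : ∀ w, ‖w - π w‖ = Metric.infDist w K) :
    ∀ ε > (0 : ℝ), ∃ δ ∈ Set.Ioo (0 : ℝ) 1,
      ∀ w v : EuclideanSpace ℝ (Fin n),
        ε ≤ Metric.infDist w K → ε ≤ Metric.infDist v K →
        ‖π w - π v‖ ≤ (1 - δ) * ‖w - v‖ :=
  stmt3_general n K hKconv M hM huc π hπmem hπdist
end

section
/- Let Q be a 2-dimensional linear subspace of ℝ^4, let p¹ be the orthogonal projection onto Q and p² the orthogonal projection onto the orthogonal complement Qᗮ. Then for every pair of vectors x, y ∈ ℝ^4 with ‖x‖ = ‖y‖ = 1 and ⟨x,y⟩ = 0, one has A(p¹x, p¹y) + A(p²x, p²y) ≤ 1. (Paper's Lemma 5.8, first part: the sum of the norms of the projections of a unit simple 2-vector onto two orthogonal planes in ℝ^4 is at most 1.) -/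
open scoped RealInnerProductSpace

/-- The area of the parallelogram spanned by `u` and `v`, i.e. the norm of the 2-vector
`u ∧ v`. -/
noncomputable def parArea {n : ℕ} (u v : EuclideanSpace ℝ (Fin n)) : ℝ :=
  Real.sqrt (‖u‖ ^ 2 * ‖v‖ ^ 2 - ⟪u, v⟫ ^ 2)

/-! Bounding each area by the product of the side lengths, and those products by AM-GM,
reduces the claim to Pythagoras for the splitting `x = p¹x + p²x`. -/

lemma parArea_le_norm_mul_norm {n : ℕ} (u v : EuclideanSpace ℝ (Fin n)) :
    parArea u v ≤ ‖u‖ * ‖v‖ :=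
  calc parArea u v ≤ Real.sqrt ((‖u‖ * ‖v‖) ^ 2) :=
        Real.sqrt_le_sqrt (by rw [mul_pow]; linarith [sq_nonneg ⟪u, v⟫])
    _ = ‖u‖ * ‖v‖ := Real.sqrt_sq (by positivity)

lemma parArea_orthogonalProjection_add_le {n : ℕ} (K : Submodule ℝ (EuclideanSpace ℝ (Fin n)))
    (x y : EuclideanSpace ℝ (Fin n)) :
    parArea (K.orthogonalProjectionOnto x : EuclideanSpace ℝ (Fin n))
        (K.orthogonalProjectionOnto y : EuclideanSpace ℝ (Fin n)) +
      parArea (Kᗮ.orthogonalProjectionOnto x : EuclideanSpace ℝ (Fin n))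
        (Kᗮ.orthogonalProjectionOnto y : EuclideanSpace ℝ (Fin n)) ≤
      (‖x‖ ^ 2 + ‖y‖ ^ 2) / 2 := by
  have hK := parArea_le_norm_mul_norm (K.orthogonalProjectionOnto x : EuclideanSpace ℝ (Fin n))
    (K.orthogonalProjectionOnto y)
  have hKperp := parArea_le_norm_mul_norm
    (Kᗮ.orthogonalProjectionOnto x : EuclideanSpace ℝ (Fin n)) (Kᗮ.orthogonalProjectionOnto y)
  simp only [Submodule.norm_coe] at hK hKperp
  rw [K.norm_sq_eq_add_norm_sq_projection x, K.norm_sq_eq_add_norm_sq_projection y]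
  linarith [two_mul_le_add_sq ‖K.orthogonalProjectionOnto x‖ ‖K.orthogonalProjectionOnto y‖,
    two_mul_le_add_sq ‖Kᗮ.orthogonalProjectionOnto x‖ ‖Kᗮ.orthogonalProjectionOnto y‖]

theorem stmt4_general (Q : Submodule ℝ (EuclideanSpace ℝ (Fin 4)))
    (x y : EuclideanSpace ℝ (Fin 4)) (hx : ‖x‖ = 1) (hy : ‖y‖ = 1) :
    parArea (Submodule.orthogonalProjectionOnto Q x : EuclideanSpace ℝ (Fin 4))
        (Submodule.orthogonalProjectionOnto Q y : EuclideanSpace ℝ (Fin 4)) +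
      parArea (Submodule.orthogonalProjectionOnto Qᗮ x : EuclideanSpace ℝ (Fin 4))
        (Submodule.orthogonalProjectionOnto Qᗮ y : EuclideanSpace ℝ (Fin 4)) ≤ 1 := by
  simpa [hx, hy] using parArea_orthogonalProjection_add_le Q x y

/-- Paper's Lemma 5.8, first part.  Let `Q` be a 2-dimensional linear
subspace of `ℝ⁴`, `p¹` the orthogonal projection onto `Q` and `p²` the orthogonal
projection onto `Qᗮ`.  For every orthonormal pair `x, y` in `ℝ⁴`,
`|p¹x ∧ p¹y| + |p²x ∧ p²y| ≤ 1`. -/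
theorem stmt4 (Q : Submodule ℝ (EuclideanSpace ℝ (Fin 4)))
    (hQ : Module.finrank ℝ Q = 2)
    (x y : EuclideanSpace ℝ (Fin 4)) (hx : ‖x‖ = 1) (hy : ‖y‖ = 1)
    (hxy : ⟪x, y⟫ = 0) :
    parArea (Submodule.orthogonalProjectionOnto Q x : EuclideanSpace ℝ (Fin 4))
        (Submodule.orthogonalProjectionOnto Q y : EuclideanSpace ℝ (Fin 4)) +
      parArea (Submodule.orthogonalProjectionOnto Qᗮ x : EuclideanSpace ℝ (Fin 4))
        (Submodule.orthogonalProjectionOnto Qᗮ y : EuclideanSpace ℝ (Fin 4)) ≤ 1 :=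
  stmt4_general Q x y hx hy
end

section
/- Let (e₁, e₂, e₃, e₄) be an orthonormal basis of ℝ^4 and let 0 ≤ α₁ ≤ α₂ ≤ π/2. Let P¹ be the linear span of {e₁, e₂} and P² the linear span of {(cos α₁)·e₁ + (sin α₁)·e₃, (cos α₂)·e₂ + (sin α₂)·e₄} (so that P¹ and P² are two planes in ℝ^4 with characteristic angles α₁ ≤ α₂). Let p¹ and p² denote the orthogonal projections onto P¹ and P² respectively. Then for every pair of vectors x, y ∈ ℝ^4 with ‖x‖ = ‖y‖ = 1 and ⟨x,y⟩ = 0, one has A(p¹x, p¹y) + A(p²x, p²y) ≤ 1 + 2·cos α₁. (Paper's Lemma 5.11: projection bound for unit simple 2-vectors onto two planes with characteristic angles α₁ ≤ α₂.) -/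
/-!
The area of the projection of a unit simple 2-vector `x ∧ y` onto the plane spanned by an
orthonormal pair `f₁, f₂` is `|⟪x ∧ y, f₁ ∧ f₂⟫|`. Split `Λ²ℝ⁴` into its self-dual and
anti-self-dual halves: by Lagrange's identity and the Plücker relation, both halves of `x ∧ y`
have length `1/√2`, while the halves of `e₁ ∧ e₂` and of `P²`'s unit 2-vector make the angles
`α₂ - α₁` and `α₁ + α₂`. Since `|p| + |q| = max |p + q| |p - q|`, Cauchy–Schwarz bounds the sum
of the two areas by `cos ((α₂ - α₁)/2) + cos ((α₁ + α₂)/2)` or by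
`sin ((α₂ - α₁)/2) + sin ((α₁ + α₂)/2)`, and both are at most `1 + 2 cos α₁`.
-/

open scoped RealInnerProductSpace

open Real

def plucker {n : ℕ} (x y : EuclideanSpace ℝ (Fin n)) (i j : Fin n) : ℝ := x i * y j - x j * y i

section PluckerCoordinates

variable (x y : EuclideanSpace ℝ (Fin 4))

lemma sum_sq_plucker :
    plucker x y 0 1 ^ 2 + plucker x y 0 2 ^ 2 + plucker x y 0 3 ^ 2 + plucker x y 1 2 ^ 2
      + plucker x y 1 3 ^ 2 + plucker x y 2 3 ^ 2 = ‖x‖ ^ 2 * ‖y‖ ^ 2 - ⟪x, y⟫ ^ 2 := by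
  simp only [plucker, EuclideanSpace.norm_sq_eq, EuclideanSpace.inner_eq_star_dotProduct,
    Fin.sum_univ_four, dotProduct, Real.norm_eq_abs, sq_abs, star_trivial]
  ring

lemma plucker_relation :
    plucker x y 0 1 * plucker x y 2 3 - plucker x y 0 2 * plucker x y 1 3
      + plucker x y 0 3 * plucker x y 1 2 = 0 := by
  simp only [plucker]; ring

lemma sum_sq_selfDual_plucker :
    (plucker x y 0 1 + plucker x y 2 3) ^ 2 + (plucker x y 0 2 - plucker x y 1 3) ^ 2
      + (plucker x y 0 3 + plucker x y 1 2) ^ 2 = ‖x‖ ^ 2 * ‖y‖ ^ 2 - ⟪x, y⟫ ^ 2 := by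
  linear_combination sum_sq_plucker x y + 2 * plucker_relation x y

lemma sum_sq_antiSelfDual_plucker :
    (plucker x y 0 1 - plucker x y 2 3) ^ 2 + (plucker x y 0 2 + plucker x y 1 3) ^ 2
      + (plucker x y 0 3 - plucker x y 1 2) ^ 2 = ‖x‖ ^ 2 * ‖y‖ ^ 2 - ⟪x, y⟫ ^ 2 := by
  linear_combination sum_sq_plucker x y - 2 * plucker_relation x y

end PluckerCoordinates

lemma abs_mul_add_mul_le {u₁ u₂ a b r : ℝ} (hu : u₁ ^ 2 + u₂ ^ 2 ≤ 1)
    (hab : a ^ 2 + b ^ 2 ≤ r ^ 2) (hr : 0 ≤ r) : |u₁ * a + u₂ * b| ≤ r := by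
  refine abs_le_of_sq_le_sq ?_ hr
  nlinarith [sq_nonneg (u₁ * b - u₂ * a), sq_nonneg a, sq_nonneg b]

lemma abs_add_abs_le_of_mem_disk {u₁ u₂ v₁ v₂ C S C' S' r₁ r₂ r₃ r₄ : ℝ}
    (hu : u₁ ^ 2 + u₂ ^ 2 ≤ 1) (hv : v₁ ^ 2 + v₂ ^ 2 ≤ 1)
    (h₁ : (1 + C) ^ 2 + S ^ 2 ≤ r₁ ^ 2) (h₂ : (1 + C') ^ 2 + S' ^ 2 ≤ r₂ ^ 2)
    (h₃ : (1 - C) ^ 2 + S ^ 2 ≤ r₃ ^ 2) (h₄ : (1 - C') ^ 2 + S' ^ 2 ≤ r₄ ^ 2)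
    (hr₁ : 0 ≤ r₁) (hr₂ : 0 ≤ r₂) (hr₃ : 0 ≤ r₃) (hr₄ : 0 ≤ r₄) :
    |u₁ + v₁| + |u₁ * C + u₂ * S + v₁ * C' + v₂ * S'| ≤ max (r₁ + r₂) (r₃ + r₄) := by
  have k₁ := abs_le.1 (abs_mul_add_mul_le hu h₁ hr₁)
  have k₂ := abs_le.1 (abs_mul_add_mul_le hv h₂ hr₂)
  have k₃ := abs_le.1 (abs_mul_add_mul_le hu (by rwa [neg_sq]) hr₃ (a := 1 - C) (b := -S))
  have k₄ := abs_le.1 (abs_mul_add_mul_le hv (by rwa [neg_sq]) hr₄ (a := 1 - C') (b := -S'))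
  rcases abs_cases (u₁ + v₁) with ⟨h, _⟩ | ⟨h, _⟩ <;>
    rcases abs_cases (u₁ * C + u₂ * S + v₁ * C' + v₂ * S') with ⟨h', _⟩ | ⟨h', _⟩ <;>
    rw [h, h'] <;> [apply le_max_of_le_left; apply le_max_of_le_right;
      apply le_max_of_le_right; apply le_max_of_le_left] <;> linarith

section Angles

variable {α₁ α₂ : ℝ}

lemma one_add_cos_add_le (hα₁ : 0 ≤ α₁) (hα₁₂ : α₁ ≤ α₂) (hα₂ : α₂ ≤ π / 2) :
    1 + cos (α₁ + α₂) ≤ 2 * cos α₁ ^ 2 := by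
  have : cos (α₁ + α₂) ≤ cos (2 * α₁) :=
    cos_le_cos_of_nonneg_of_le_pi (by linarith) (by linarith) (by linarith)
  linarith [cos_two_mul α₁]

lemma one_sub_cos_sub_le (hα₁ : 0 ≤ α₁) (hα₁₂ : α₁ ≤ α₂) (hα₂ : α₂ ≤ π / 2) :
    1 - cos (α₂ - α₁) ≤ cos α₁ ^ 2 := by
  have : sin α₁ ≤ cos (α₂ - α₁) := by
    rw [← cos_pi_div_two_sub]
    exact cos_le_cos_of_nonneg_of_le_pi (by linarith) (by linarith [pi_pos]) (by linarith)
  nlinarith [sin_sq_add_cos_sq α₁, sin_nonneg_of_nonneg_of_le_pi hα₁ (by linarith [pi_pos])]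

end Angles

lemma abs_plucker_add_abs_le {α₁ α₂ : ℝ} (hα₁ : 0 ≤ α₁) (hα₁₂ : α₁ ≤ α₂) (hα₂ : α₂ ≤ π / 2)
    {x y : EuclideanSpace ℝ (Fin 4)} (hx : ‖x‖ = 1) (hy : ‖y‖ = 1) (hxy : ⟪x, y⟫ = 0) :
    |plucker x y 0 1|
      + |(cos α₁ * x 0 + sin α₁ * x 2) * (cos α₂ * y 1 + sin α₂ * y 3)
        - (cos α₂ * x 1 + sin α₂ * x 3) * (cos α₁ * y 0 + sin α₁ * y 2)| ≤ 1 + 2 * cos α₁ := by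
  have hc₁ : 0 ≤ cos α₁ := cos_nonneg_of_mem_Icc ⟨by linarith [pi_pos], by linarith⟩
  have hA : ‖x‖ ^ 2 * ‖y‖ ^ 2 - ⟪x, y⟫ ^ 2 = 1 := by rw [hx, hy, hxy]; norm_num
  have hu := sum_sq_selfDual_plucker x y
  have hv := sum_sq_antiSelfDual_plucker x y
  have key := abs_add_abs_le_of_mem_disk
    (u₁ := plucker x y 0 1 + plucker x y 2 3) (u₂ := plucker x y 0 3 + plucker x y 1 2)
    (v₁ := plucker x y 0 1 - plucker x y 2 3) (v₂ := plucker x y 0 3 - plucker x y 1 2)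
    (C := cos (α₂ - α₁)) (S := sin (α₂ - α₁)) (C' := cos (α₁ + α₂)) (S' := sin (α₁ + α₂))
    (r₁ := 2) (r₂ := 2 * cos α₁) (r₃ := 4 * cos α₁) (r₄ := 2)
    (by nlinarith [sq_nonneg (plucker x y 0 2 - plucker x y 1 3)])
    (by nlinarith [sq_nonneg (plucker x y 0 2 + plucker x y 1 3)])
    (by nlinarith [sin_sq_add_cos_sq (α₂ - α₁), cos_le_one (α₂ - α₁)])
    (by nlinarith [sin_sq_add_cos_sq (α₁ + α₂), one_add_cos_add_le hα₁ hα₁₂ hα₂])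
    (by nlinarith [sin_sq_add_cos_sq (α₂ - α₁), one_sub_cos_sub_le hα₁ hα₁₂ hα₂])
    (by nlinarith [sin_sq_add_cos_sq (α₁ + α₂), neg_one_le_cos (α₁ + α₂)])
    zero_le_two (by positivity) (by positivity) zero_le_two
  rw [cos_sub, sin_sub, cos_add, sin_add] at key
  have e₁ : plucker x y 0 1 + plucker x y 2 3 + (plucker x y 0 1 - plucker x y 2 3)
      = 2 * plucker x y 0 1 := by ring
  have e₂ : (plucker x y 0 1 + plucker x y 2 3) * (cos α₂ * cos α₁ + sin α₂ * sin α₁)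
        + (plucker x y 0 3 + plucker x y 1 2) * (sin α₂ * cos α₁ - cos α₂ * sin α₁)
        + (plucker x y 0 1 - plucker x y 2 3) * (cos α₁ * cos α₂ - sin α₁ * sin α₂)
        + (plucker x y 0 3 - plucker x y 1 2) * (sin α₁ * cos α₂ + cos α₁ * sin α₂)
      = 2 * ((cos α₁ * x 0 + sin α₁ * x 2) * (cos α₂ * y 1 + sin α₂ * y 3)
        - (cos α₂ * x 1 + sin α₂ * x 3) * (cos α₁ * y 0 + sin α₁ * y 2)) := by
    simp only [plucker]; ring
  rw [e₁, e₂, abs_mul, abs_mul, abs_two, max_eq_right (by linarith)] at key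
  linarith

section Projection

variable {E : Type*} [NormedAddCommGroup E] [InnerProductSpace ℝ E] {ι : Type*}

lemma orthogonalProjectionOnto_span_pair [FiniteDimensional ℝ E] {u v : E} (hu : ‖u‖ = 1)
    (hv : ‖v‖ = 1) (huv : ⟪u, v⟫ = 0) (x : E) :
    ((Submodule.span ℝ {u, v}).orthogonalProjectionOnto x : E) = ⟪u, x⟫ • u + ⟪v, x⟫ • v := by
  refine Submodule.eq_starProjection_of_mem_of_inner_eq_zero
    (Submodule.mem_span_pair.2 ⟨_, _, rfl⟩) fun w hw ↦ ?_
  obtain ⟨a, b, rfl⟩ := Submodule.mem_span_pair.1 hw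
  simp only [inner_sub_left, inner_add_left, inner_add_right, real_inner_smul_left,
    real_inner_smul_right, inner_self_eq_one_of_norm_eq_one hu,
    inner_self_eq_one_of_norm_eq_one hv, huv, real_inner_comm u v,
    real_inner_comm u x, real_inner_comm v x]
  ring

lemma norm_cos_smul_add_sin_smul {e : ι → E} (he : Orthonormal ℝ e) {i j : ι} (hij : i ≠ j)
    (θ : ℝ) : ‖cos θ • e i + sin θ • e j‖ = 1 := by
  rw [norm_eq_sqrt_real_inner, sqrt_eq_one]
  simp only [inner_add_left, inner_add_right, real_inner_smul_left, real_inner_smul_right,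
    inner_self_eq_one_of_norm_eq_one (he.1 i), inner_self_eq_one_of_norm_eq_one (he.1 j),
    he.2 hij, he.2 hij.symm]
  linear_combination cos_sq_add_sin_sq θ

lemma inner_smul_add_smul_eq_zero {e : ι → E} (he : Orthonormal ℝ e) {i j k l : ι}
    (hik : i ≠ k) (hil : i ≠ l) (hjk : j ≠ k) (hjl : j ≠ l) (a b c d : ℝ) :
    ⟪a • e i + b • e j, c • e k + d • e l⟫ = 0 := by
  simp only [inner_add_left, inner_add_right, real_inner_smul_left, real_inner_smul_right,
    he.2 hik, he.2 hil, he.2 hjk, he.2 hjl]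
  ring

end Projection

lemma parArea_smul_add_smul {n : ℕ} {u v : EuclideanSpace ℝ (Fin n)} (hu : ‖u‖ = 1)
    (hv : ‖v‖ = 1) (huv : ⟪u, v⟫ = 0) (a b c d : ℝ) :
    parArea (a • u + b • v) (c • u + d • v) = |a * d - b * c| := by
  rw [parArea, ← sqrt_sq_eq_abs, ← real_inner_self_eq_norm_sq, ← real_inner_self_eq_norm_sq]
  congr 1
  simp only [inner_add_left, inner_add_right, real_inner_smul_left,
    real_inner_smul_right, inner_self_eq_one_of_norm_eq_one hu,
    inner_self_eq_one_of_norm_eq_one hv, huv, real_inner_comm u v]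
  ring

/-- Paper's Lemma 5.11.  Let `(e₁, e₂, e₃, e₄)` be an orthonormal basis
of `ℝ⁴` and `0 ≤ α₁ ≤ α₂ ≤ π/2`.  Let `P¹ = span{e₁, e₂}` and
`P² = span{cos α₁ · e₁ + sin α₁ · e₃, cos α₂ · e₂ + sin α₂ · e₄}`, with orthogonal
projections `p¹, p²`.  Then for every orthonormal pair `x, y` in `ℝ⁴`,
`|p¹x ∧ p¹y| + |p²x ∧ p²y| ≤ 1 + 2 cos α₁`. -/
theorem stmt6 (e : OrthonormalBasis (Fin 4) ℝ (EuclideanSpace ℝ (Fin 4)))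
    (α₁ α₂ : ℝ) (hα₁ : 0 ≤ α₁) (hα₁₂ : α₁ ≤ α₂) (hα₂ : α₂ ≤ Real.pi / 2)
    (x y : EuclideanSpace ℝ (Fin 4)) (hx : ‖x‖ = 1) (hy : ‖y‖ = 1)
    (hxy : ⟪x, y⟫ = 0) :
    parArea
        (Submodule.orthogonalProjectionOnto (Submodule.span ℝ {e 0, e 1}) x : EuclideanSpace ℝ (Fin 4))
        (Submodule.orthogonalProjectionOnto (Submodule.span ℝ {e 0, e 1}) y : EuclideanSpace ℝ (Fin 4)) +
      parArea
        (Submodule.orthogonalProjectionOnto (Submodule.span ℝ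
            {Real.cos α₁ • e 0 + Real.sin α₁ • e 2,
             Real.cos α₂ • e 1 + Real.sin α₂ • e 3}) x : EuclideanSpace ℝ (Fin 4))
        (Submodule.orthogonalProjectionOnto (Submodule.span ℝ
            {Real.cos α₁ • e 0 + Real.sin α₁ • e 2,
             Real.cos α₂ • e 1 + Real.sin α₂ • e 3}) y : EuclideanSpace ℝ (Fin 4))
      ≤ 1 + 2 * Real.cos α₁ := by
  have he := e.orthonormal
  have hf₁ := norm_cos_smul_add_sin_smul he (show (0 : Fin 4) ≠ 2 by decide) α₁
  have hf₂ := norm_cos_smul_add_sin_smul he (show (1 : Fin 4) ≠ 3 by decide) α₂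
  have hf₁₂ := inner_smul_add_smul_eq_zero he (i := 0) (j := 2) (k := 1) (l := 3)
    (by decide) (by decide) (by decide) (by decide) (cos α₁) (sin α₁) (cos α₂) (sin α₂)
  rw [orthogonalProjectionOnto_span_pair (he.1 0) (he.1 1) (he.2 (by decide)),
    orthogonalProjectionOnto_span_pair (he.1 0) (he.1 1) (he.2 (by decide)),
    orthogonalProjectionOnto_span_pair hf₁ hf₂ hf₁₂,
    orthogonalProjectionOnto_span_pair hf₁ hf₂ hf₁₂,
    parArea_smul_add_smul (he.1 0) (he.1 1) (he.2 (by decide)),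
    parArea_smul_add_smul hf₁ hf₂ hf₁₂]
  simp only [inner_add_left, real_inner_smul_left, ← e.repr_apply_apply]
  simpa [plucker] using abs_plucker_add_abs_le hα₁ hα₁₂ hα₂
    (x := e.repr x) (y := e.repr y) (by simpa using hx) (by simpa using hy) (by simpa using hxy)
end
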